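/- Fix weight constants l > 0 and q > 0. Then the iterated limit of the expected contrastive loss exists and equals the loss of the expectations: lim_{m→∞} lim_{n→∞} E[ −log( ((l/m)∑_{j=1}^m g(ξ_j)) / ( g(v′) + (q/n)∑_{k=1}^n g(η_k) ) ) ] = −log( l·E_{u∼p⁺}[g(u)] / ( g(v′) + q·E_{u∼p⁻}[g(u)] ) ), where E_{u∼p⁺}[g(u)] = ∑_{u∈V} p⁺(u) g(u) and E_{u∼p⁻}[g(u)] = ∑_{u∈V} p⁻(u) g(u). -/

import Mathlib

/-!
Both limits are strong laws of large numbers: almost surely the sample means of `g` along `η`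
and along `ξ` converge to the corresponding expectations. Since `V` is finite and `g` is
positive, `g` takes values in a compact interval `[c, C] ⊂ (0, ∞)`, so every argument of the
logarithm stays in a fixed compact subinterval of `(0, ∞)`; the logarithms are then uniformly
bounded and dominated convergence passes the almost sure limits through the expectation, first
in `n` and then in `m`.
-/

open MeasureTheory ProbabilityTheory Filter Topology Set

lemma Finite.exists_pos_forall_mem_Icc {α : Type*} [Finite α] [Nonempty α] {f : α → ℝ}
    (hf : ∀ x, 0 < f x) : ∃ c C : ℝ, 0 < c ∧ ∀ x, f x ∈ Icc c C := by
  obtain ⟨x₀, hmin⟩ := Finite.exists_min f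
  obtain ⟨x₁, hmax⟩ := Finite.exists_max f
  exact ⟨f x₀, f x₁, hf x₀, fun x => ⟨hmin x, hmax x⟩⟩

lemma abs_log_le_of_mem_Icc {a b x : ℝ} (ha : 0 < a) (hx : x ∈ Icc a b) :
    |Real.log x| ≤ |Real.log a| + |Real.log b| := by
  have hlo := Real.log_le_log ha hx.1
  have hhi := Real.log_le_log (ha.trans_le hx.1) hx.2
  rw [abs_le]
  constructor <;> linarith [neg_abs_le (Real.log a), le_abs_self (Real.log b),
    abs_nonneg (Real.log a), abs_nonneg (Real.log b)]

section LogIntegral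

variable {ι Ω : Type*} {l : Filter ι} [l.IsCountablyGenerated] [l.NeBot] [MeasurableSpace Ω]
  {μ : Measure Ω} [IsFiniteMeasure μ]

theorem tendsto_integral_log_of_mem_Icc {F : ι → Ω → ℝ} {G : Ω → ℝ} {a b : ℝ} (ha : 0 < a)
    (hF : ∀ i, Measurable (F i)) (hF_mem : ∀ᶠ i in l, ∀ ω, F i ω ∈ Icc a b)
    (hlim : ∀ᵐ ω ∂μ, Tendsto (F · ω) l (𝓝 (G ω))) :
    Tendsto (fun i => ∫ ω, Real.log (F i ω) ∂μ) l (𝓝 (∫ ω, Real.log (G ω) ∂μ)) := by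
  refine tendsto_integral_filter_of_dominated_convergence
    (fun _ => |Real.log a| + |Real.log b|)
    (.of_forall fun i => (Real.measurable_log.comp (hF i)).aestronglyMeasurable)
    (hF_mem.mono fun i hi => .of_forall fun ω => abs_log_le_of_mem_Icc ha (hi ω))
    (integrable_const _) ?_
  filter_upwards [hlim] with ω hω
  have hG : G ω ∈ Icc a b := isClosed_Icc.mem_of_tendsto hω (hF_mem.mono fun i hi => hi ω)
  exact (Real.continuousAt_log (ha.trans_le hG.1).ne').tendsto.comp hω

theorem tendsto_integral_log_div {N Y : ι → Ω → ℝ} {N' Y' : Ω → ℝ} {a b c d : ℝ}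
    (ha : 0 < a) (hc : 0 < c) (hcd : c ≤ d)
    (hN : ∀ i, Measurable (N i)) (hY : ∀ i, Measurable (Y i))
    (hN_mem : ∀ᶠ i in l, ∀ ω, N i ω ∈ Icc a b) (hY_mem : ∀ᶠ i in l, ∀ ω, Y i ω ∈ Icc c d)
    (hN_lim : ∀ᵐ ω ∂μ, Tendsto (N · ω) l (𝓝 (N' ω)))
    (hY_lim : ∀ᵐ ω ∂μ, Tendsto (Y · ω) l (𝓝 (Y' ω))) :
    Tendsto (fun i => ∫ ω, Real.log (N i ω / Y i ω) ∂μ) l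
      (𝓝 (∫ ω, Real.log (N' ω / Y' ω) ∂μ)) := by
  have hd : 0 < d := hc.trans_le hcd
  refine tendsto_integral_log_of_mem_Icc (a := a / d) (b := b / c) (by positivity)
    (fun i => (hN i).div (hY i)) ?_ ?_
  · filter_upwards [hN_mem, hY_mem] with i hNi hYi ω
    obtain ⟨hNa, hNb⟩ := hNi ω
    obtain ⟨hYc, hYd⟩ := hYi ω
    exact ⟨div_le_div₀ (ha.trans_le hNa).le hNa (hc.trans_le hYc) hYd,
      div_le_div₀ (ha.trans_le (hNa.trans hNb)).le hNb hc hYc⟩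
  · filter_upwards [hN_lim, hY_lim] with ω hNω hYω
    have hY' : c ≤ Y' ω := isClosed_Ici.mem_of_tendsto hYω (hY_mem.mono fun i hi => (hi ω).1)
    exact hNω.div hYω (hc.trans_le hY').ne'

end LogIntegral

section SampleMean

variable {Ω V : Type*}

noncomputable def sampleMean (h : V → ℝ) (X : ℕ → Ω → V) (n : ℕ) (ω : Ω) : ℝ :=
  (∑ k ∈ Finset.range n, h (X k ω)) / n

lemma div_mul_sum_eq_mul_sampleMean (a : ℝ) (h : V → ℝ) (X : ℕ → Ω → V) (n : ℕ) (ω : Ω) :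
    a / n * ∑ k ∈ Finset.range n, h (X k ω) = a * sampleMean h X n ω := by
  rw [sampleMean, mul_div_assoc', div_mul_eq_mul_div]

lemma sampleMean_mem_Icc {h : V → ℝ} {c C : ℝ} (hh : ∀ u, h u ∈ Icc c C)
    (X : ℕ → Ω → V) {n : ℕ} (hn : n ≠ 0) (ω : Ω) : sampleMean h X n ω ∈ Icc c C := by
  have hn' : (0 : ℝ) < n := by positivity
  rw [sampleMean, mem_Icc, le_div_iff₀ hn', div_le_iff₀ hn']
  constructor
  · simpa [mul_comm] using
      Finset.card_nsmul_le_sum (.range n) (fun k => h (X k ω)) c fun k _ => (hh _).1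
  · simpa [mul_comm] using
      Finset.sum_le_card_nsmul (.range n) (fun k => h (X k ω)) C fun k _ => (hh _).2

lemma mul_sampleMean_mem_Icc {h : V → ℝ} {c C a : ℝ} (ha : 0 ≤ a) (hh : ∀ u, h u ∈ Icc c C)
    (X : ℕ → Ω → V) {n : ℕ} (hn : n ≠ 0) (ω : Ω) :
    a * sampleMean h X n ω ∈ Icc (a * c) (a * C) :=
  have hmem := sampleMean_mem_Icc hh X hn ω
  ⟨mul_le_mul_of_nonneg_left hmem.1 ha, mul_le_mul_of_nonneg_left hmem.2 ha⟩

variable [MeasurableSpace Ω] [MeasurableSpace V]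

lemma measurable_sampleMean {h : V → ℝ} (hh : Measurable h) {X : ℕ → Ω → V}
    (hX : ∀ k, Measurable (X k)) (n : ℕ) : Measurable (sampleMean h X n) :=
  (Finset.measurable_sum _ fun k _ => hh.comp (hX k)).div_const _

variable [Fintype V] [MeasurableSingletonClass V]

lemma identDistrib_of_measure_eq {μ ν : Measure Ω} {X Y : Ω → V} (hX : Measurable X)
    (hY : Measurable Y) (hlaw : ∀ u, μ {ω | X ω = u} = ν {ω | Y ω = u}) :
    IdentDistrib X Y μ ν :=
  ⟨hX.aemeasurable, hY.aemeasurable, Measure.ext_of_singleton fun u => by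
    rw [Measure.map_apply hX (measurableSet_singleton u),
      Measure.map_apply hY (measurableSet_singleton u)]
    exact hlaw u⟩

lemma integral_comp_eq_sum {μ : Measure Ω} [IsFiniteMeasure μ] {X : Ω → V}
    (hX : Measurable X) {p : V → ℝ} (hp : ∀ u, 0 ≤ p u)
    (hlaw : ∀ u, μ {ω | X ω = u} = ENNReal.ofReal (p u)) (h : V → ℝ) :
    ∫ ω, h (X ω) ∂μ = ∑ u, p u * h u := by
  have hh : Measurable h := measurable_of_finite h
  rw [← integral_map hX.aemeasurable hh.aestronglyMeasurable, integral_fintype .of_finite]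
  refine Finset.sum_congr rfl fun u _ => ?_
  rw [measureReal_def, Measure.map_apply hX (measurableSet_singleton u), smul_eq_mul]
  simp only [preimage, mem_singleton_iff, hlaw u, ENNReal.toReal_ofReal (hp u)]

theorem ae_tendsto_sampleMean {μ : Measure Ω} [IsFiniteMeasure μ] {X : ℕ → Ω → V}
    (hX : ∀ k, Measurable (X k)) (hindep : Pairwise fun i j => IndepFun (X i) (X j) μ)
    {p : V → ℝ} (hp : ∀ u, 0 ≤ p u)
    (hlaw : ∀ k u, μ {ω | X k ω = u} = ENNReal.ofReal (p u)) (h : V → ℝ) :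
    ∀ᵐ ω ∂μ, Tendsto (sampleMean h X · ω) atTop (𝓝 (∑ u, p u * h u)) := by
  have hh : Measurable h := measurable_of_finite h
  have hlln := strong_law_ae_real (fun k ω => h (X k ω))
    ((integrable_map_measure hh.aestronglyMeasurable (hX 0).aemeasurable).1 .of_finite)
    (fun i j hij => (hindep hij).comp hh hh)
    (fun k => (identDistrib_of_measure_eq (hX k) (hX 0) fun u => by
      rw [hlaw k u, hlaw 0 u]).comp hh)
  rwa [integral_comp_eq_sum (hX 0) hp (hlaw 0)] at hlln

end SampleMean

theorem stmt0_general
    {V : Type*} [Fintype V] [Nonempty V] [MeasurableSpace V] [MeasurableSingletonClass V]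
    {d : ℕ} (f : V → EuclideanSpace ℝ (Fin d))
    (τ : ℝ) (v v' : V)
    (g : V → ℝ) (hg : ∀ u, g u = Real.exp ((inner ℝ (f v) (f u) : ℝ) / τ))
    (pPos pNeg : V → ℝ)
    (hpos0 : ∀ u, 0 ≤ pPos u)
    (hneg0 : ∀ u, 0 ≤ pNeg u)
    (l q : ℝ) (hl : 0 < l) (hq : 0 < q)
    {Ω : Type*} [MeasurableSpace Ω] (μ : Measure Ω) [IsProbabilityMeasure μ]
    (ξ η : ℕ → Ω → V)
    (hmeasξ : ∀ j, Measurable (ξ j)) (hmeasη : ∀ k, Measurable (η k))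
    (hindep : iIndepFun (Sum.elim ξ η) μ)
    (hξlaw : ∀ j u, μ {ω | ξ j ω = u} = ENNReal.ofReal (pPos u))
    (hηlaw : ∀ k u, μ {ω | η k ω = u} = ENNReal.ofReal (pNeg u)) :
    ∃ A : ℕ → ℝ,
      (∀ m : ℕ,
        Tendsto (fun n : ℕ =>
            ∫ ω, -Real.log
              (((l / (m : ℝ)) * ∑ j ∈ Finset.range m, g (ξ j ω)) /
                (g v' + (q / (n : ℝ)) * ∑ k ∈ Finset.range n, g (η k ω))) ∂μ)
          atTop (nhds (A m))) ∧
      Tendsto A atTop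
        (nhds (-Real.log ((l * ∑ u, pPos u * g u) /
          (g v' + q * ∑ u, pNeg u * g u)))) := by
  obtain ⟨c, C, hc, hgc⟩ :=
    Finite.exists_pos_forall_mem_Icc fun u => (hg u).symm ▸ Real.exp_pos (_ / τ)
  have hcC : c ≤ C := (hgc v').1.trans (hgc v').2
  have hv' : 0 < g v' := hc.trans_le (hgc v').1
  have hgm : Measurable g := measurable_of_finite g
  have hξ := ae_tendsto_sampleMean hmeasξ
    (fun i j hij => hindep.indepFun (Sum.inl_injective.ne hij)) hpos0 hξlaw g
  have hη := ae_tendsto_sampleMean hmeasη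
    (fun i j hij => hindep.indepFun (Sum.inr_injective.ne hij)) hneg0 hηlaw g
  set D := g v' + q * ∑ u, pNeg u * g u
  have hD : 0 < D := add_pos_of_pos_of_nonneg hv' (mul_nonneg hq.le
    (Finset.sum_nonneg fun u _ => mul_nonneg (hneg0 u) (hc.trans_le (hgc u).1).le))
  have hN_mem m (hm : m ≠ 0) ω := mul_sampleMean_mem_Icc hl.le hgc ξ hm ω
  have hD_mem n (hn : n ≠ 0) ω :
      g v' + q * sampleMean g η n ω ∈ Icc (g v' + q * c) (g v' + q * C) :=
    have hmem := mul_sampleMean_mem_Icc hq.le hgc η hn ω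
    ⟨add_le_add_right hmem.1 _, add_le_add_right hmem.2 _⟩
  have hN_meas m := (measurable_sampleMean hgm hmeasξ m).const_mul l
  have hD_meas n := ((measurable_sampleMean hgm hmeasη n).const_mul q).const_add (g v')
  simp only [div_mul_sum_eq_mul_sampleMean]
  refine ⟨fun m => -∫ ω, Real.log (l * sampleMean g ξ m ω / D) ∂μ, fun m => ?_, ?_⟩
  · rcases eq_or_ne m 0 with rfl | hm
    · -- the empty numerator makes every integrand `-Real.log 0 = 0`
      simp [sampleMean]
    simp only [integral_neg]
    exact (tendsto_integral_log_div (by positivity) (by positivity) (by gcongr)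
      (fun _ => hN_meas m) hD_meas (.of_forall fun _ => hN_mem m hm)
      ((eventually_ne_atTop 0).mono hD_mem) (.of_forall fun _ => tendsto_const_nhds)
      (hη.mono fun ω hω => tendsto_const_nhds.add (hω.const_mul q))).neg
  · simpa using (tendsto_integral_log_div (μ := μ) (by positivity) hD le_rfl hN_meas
      (fun _ => measurable_const) ((eventually_ne_atTop 0).mono hN_mem)
      (.of_forall fun _ _ => ⟨le_rfl, le_rfl⟩) (hξ.mono fun ω hω => hω.const_mul l)
      (.of_forall fun _ => tendsto_const_nhds)).neg

/-- The iterated limit of the expected contrastive loss exists and equals the loss of the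
expectations. -/
theorem stmt0
    {V : Type*} [Fintype V] [Nonempty V] [MeasurableSpace V] [MeasurableSingletonClass V]
    {d : ℕ} (f : V → EuclideanSpace ℝ (Fin d)) (hf : ∀ u, ‖f u‖ = 1)
    (τ : ℝ) (hτ : 0 < τ) (v v' : V)
    (g : V → ℝ) (hg : ∀ u, g u = Real.exp ((inner ℝ (f v) (f u) : ℝ) / τ))
    (pPos pNeg : V → ℝ)
    (hpos0 : ∀ u, 0 ≤ pPos u) (hpos1 : ∑ u, pPos u = 1)
    (hneg0 : ∀ u, 0 ≤ pNeg u) (hneg1 : ∑ u, pNeg u = 1)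
    (l q : ℝ) (hl : 0 < l) (hq : 0 < q)
    {Ω : Type*} [MeasurableSpace Ω] (μ : Measure Ω) [IsProbabilityMeasure μ]
    (ξ η : ℕ → Ω → V)
    (hmeasξ : ∀ j, Measurable (ξ j)) (hmeasη : ∀ k, Measurable (η k))
    (hindep : iIndepFun (Sum.elim ξ η) μ)
    (hξlaw : ∀ j u, μ {ω | ξ j ω = u} = ENNReal.ofReal (pPos u))
    (hηlaw : ∀ k u, μ {ω | η k ω = u} = ENNReal.ofReal (pNeg u)) :
    ∃ A : ℕ → ℝ,
      (∀ m : ℕ,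
        Tendsto (fun n : ℕ =>
            ∫ ω, -Real.log
              (((l / (m : ℝ)) * ∑ j ∈ Finset.range m, g (ξ j ω)) /
                (g v' + (q / (n : ℝ)) * ∑ k ∈ Finset.range n, g (η k ω))) ∂μ)
          atTop (nhds (A m))) ∧
      Tendsto A atTop
        (nhds (-Real.log ((l * ∑ u, pPos u * g u) /
          (g v' + q * ∑ u, pNeg u * g u)))) :=
  stmt0_general f τ v v' g hg pPos pNeg hpos0 hneg0 l q hl hq μ ξ η hmeasξ hmeasη hindep hξlaw hηlaw
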